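/- In a graph product with shortlex ordering compatible with a total order on vertices, for any subset V' of the vertex set, the shortlex conjugacy normal forms of G_V lying in X_{V'}^* are exactly the shortlex conjugacy normal forms of the subgraph product: SLC(G_V, X_V) \cap X_{V'}^* = SLC(G_{V'}, X_{V'}). -/

import Mathlib

/-- Word length of `g` over a generating subset `X` of a group. -/
noncomputable def wlen {G : Type*} [Group G] (X : Set G) (g : G) : ℕ :=
  sInf {n | ∃ w : List G, w.length = n ∧ (∀ x ∈ w, x ∈ X) ∧ w.prod = g}

/-- The defining commutator relators of a graph product. -/
def gpRels {V : Type*} (Γ : SimpleGraph V) (G : V → Type*) [∀ v, Group (G v)] :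
    Set (Monoid.CoprodI G) :=
  {x | ∃ (v w : V) (a : G v) (b : G w), Γ.Adj v w ∧
    x = Monoid.CoprodI.of a * Monoid.CoprodI.of b *
          (Monoid.CoprodI.of a)⁻¹ * (Monoid.CoprodI.of b)⁻¹}

/-- The graph product of the groups `G v` over the graph `Γ`. -/
abbrev GraphProduct {V : Type*} (Γ : SimpleGraph V) (G : V → Type*) [∀ v, Group (G v)] :
    Type _ :=
  Monoid.CoprodI G ⧸ Subgroup.normalClosure (gpRels Γ G)

/-- The canonical homomorphism from a vertex group into the graph product. -/
def GraphProduct.of {V : Type*} (Γ : SimpleGraph V) (G : V → Type*) [∀ v, Group (G v)]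
    (v : V) : G v →* GraphProduct Γ G :=
  (QuotientGroup.mk' _).comp Monoid.CoprodI.of

/-- The generating set `X_S = ∪_{v ∈ S} X_v` inside the graph product. -/
def XS {V : Type*} (Γ : SimpleGraph V) (G : V → Type*) [∀ v, Group (G v)]
    (X : ∀ v, Set (G v)) (S : Set V) : Set (GraphProduct Γ G) :=
  ⋃ v ∈ S, (GraphProduct.of Γ G v) '' (X v)

/-- The alphabet of letters: a vertex together with a generator of its vertex group. -/
abbrev GPLetter {V : Type*} (G : V → Type*) (X : ∀ v, Set (G v)) : Type _ :=
  Σ v : V, {x : G v // x ∈ X v}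

/-- Evaluation of a word over the alphabet in the graph product. -/
def evalWord {V : Type*} (Γ : SimpleGraph V) (G : V → Type*) [∀ v, Group (G v)]
    (X : ∀ v, Set (G v)) (w : List (GPLetter G X)) : GraphProduct Γ G :=
  (w.map fun a => GraphProduct.of Γ G a.1 a.2.1).prod

/-- The shortlex order on words induced by a strict order `lt` on letters:
shorter words come first, and words of equal length are compared lexicographically. -/
def shortlex {A : Type*} (lt : A → A → Prop) (w u : List A) : Prop :=
  w.length < u.length ∨ (w.length = u.length ∧ List.Lex lt w u)

/-- The order on letters compatible with the total order on `V`: letters with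
smaller support come first, letters with the same support are compared by `r`. -/
def letterLt {V : Type*} [LinearOrder V] (G : V → Type*) (X : ∀ v, Set (G v))
    (r : ∀ v, {x : G v // x ∈ X v} → {x : G v // x ∈ X v} → Prop) :
    GPLetter G X → GPLetter G X → Prop :=
  Sigma.Lex (· < ·) r

/-- The shortlex conjugacy normal forms of the subgraph product `G_{V'}`: words over
the sub-alphabet `X_{V'}` that are shortlex-least among all words over `X_{V'}`
representing elements of the same conjugacy class of `G_{V'}` (conjugacy taken in
the subgroup generated by `X_{V'}`). -/
def SLCwords {V : Type*} [LinearOrder V] (Γ : SimpleGraph V) (G : V → Type*)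
    [∀ v, Group (G v)] (X : ∀ v, Set (G v))
    (r : ∀ v, {x : G v // x ∈ X v} → {x : G v // x ∈ X v} → Prop)
    (V' : Set V) : Set (List (GPLetter G X)) :=
  {w | (∀ a ∈ w, a.1 ∈ V') ∧
    ∀ u : List (GPLetter G X), (∀ a ∈ u, a.1 ∈ V') →
      (∃ g ∈ Subgroup.closure (XS Γ G X V'),
          g * evalWord Γ G X u * g⁻¹ = evalWord Γ G X w) →
      u = w ∨ shortlex (letterLt G X r) w u}

/-
Killing the vertex groups outside `V'` respects the commutation relators, so it defines a
retraction `ρ : G_V → G_{V'}` that acts on words by deleting the letters outside `X_{V'}`.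
If `w ∈ X_{V'}^*` and `g u g⁻¹ = w` in `G_V`, applying `ρ` gives `ρ g · ρ u · (ρ g)⁻¹ = w` in
`G_{V'}`, and the subword `ρ u` of `u` is shortlex-smaller than `u` unless equal to it. So a word
minimal in its conjugacy class of `G_{V'}` is minimal in its class of `G_V`; the converse is
immediate since `G_{V'} ≤ G_V`.
-/

theorem List.Sublist.eq_or_shortlex {A : Type*} {lt : A → A → Prop} {u u' w : List A}
    (hsub : List.Sublist u' u) (h : u' = w ∨ shortlex lt w u') : u = w ∨ shortlex lt w u := by
  rcases hsub.length_le.lt_or_eq with hlt | heq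
  · right; left
    rcases h with rfl | hlen | ⟨hlen, -⟩
    · exact hlt
    · exact hlen.trans hlt
    · exact hlen.trans_lt hlt
  · rwa [← hsub.eq_of_length heq]

theorem XS_mono {V : Type*} (Γ : SimpleGraph V) (G : V → Type*) [∀ v, Group (G v)]
    (X : ∀ v, Set (G v)) {S T : Set V} (hST : S ⊆ T) : XS Γ G X S ⊆ XS Γ G X T :=
  Set.biUnion_subset_biUnion_left hST

theorem evalWord_cons {V : Type*} (Γ : SimpleGraph V) (G : V → Type*) [∀ v, Group (G v)]
    (X : ∀ v, Set (G v)) (a : GPLetter G X) (w : List (GPLetter G X)) :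
    evalWord Γ G X (a :: w) = GraphProduct.of Γ G a.1 a.2.1 * evalWord Γ G X w := by
  simp [evalWord]

namespace GraphProduct

variable {V : Type*} {Γ : SimpleGraph V} {G : V → Type*} [∀ v, Group (G v)]

theorem of_commute {v w : V} (hvw : Γ.Adj v w) (a : G v) (b : G w) :
    Commute (of Γ G v a) (of Γ G w b) := by
  rw [← commutatorElement_eq_one_iff_commute, commutatorElement_def]
  exact (QuotientGroup.eq_one_iff _).mpr (Subgroup.subset_normalClosure ⟨v, w, a, b, hvw, rfl⟩)

variable {H : Type*} [Group H] (f : ∀ v, G v →* H)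
  (hf : ∀ v w, Γ.Adj v w → ∀ a b, Commute (f v a) (f w b))

def lift : GraphProduct Γ G →* H :=
  QuotientGroup.lift _ (Monoid.CoprodI.lift f) <| by
    refine Subgroup.normalClosure_le_normal ?_
    rintro _ ⟨v, w, a, b, hvw, rfl⟩
    simp [(hf v w hvw a b).eq]

@[simp]
theorem lift_of (v : V) (x : G v) : lift f hf (of Γ G v x) = f v x :=
  Monoid.CoprodI.lift_of f x

theorem lift_range_le {s : Subgroup H} (h : ∀ v, (f v).range ≤ s) : (lift f hf).range ≤ s := by
  rintro _ ⟨g, rfl⟩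
  induction g using QuotientGroup.induction_on with
  | H z => exact Monoid.CoprodI.lift_range_le _ f h ⟨z, rfl⟩

variable (Γ G) (V' : Set V) [DecidablePred (· ∈ V')]

def retract : GraphProduct Γ G →* GraphProduct Γ G :=
  lift (fun v => if v ∈ V' then of Γ G v else 1) <| by
    intro v w hvw a b
    split_ifs
    · exact of_commute hvw a b
    all_goals simp

theorem retract_of (v : V) (x : G v) :
    retract Γ G V' (of Γ G v x) = if v ∈ V' then of Γ G v x else 1 := by
  rw [retract, lift_of]
  split_ifs <;> rfl

theorem retract_evalWord (X : ∀ v, Set (G v)) (u : List (GPLetter G X)) :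
    retract Γ G V' (evalWord Γ G X u) = evalWord Γ G X (u.filter (·.1 ∈ V')) := by
  induction u with
  | nil => simp [evalWord]
  | cons a u ih =>
    rw [evalWord_cons, map_mul, ih, retract_of, List.filter_cons]
    split_ifs <;> simp_all [evalWord_cons]

theorem range_retract_le_closure (X : ∀ v, Set (G v)) (hgen : ∀ v, Subgroup.closure (X v) = ⊤) :
    (retract Γ G V').range ≤ Subgroup.closure (XS Γ G X V') := by
  refine lift_range_le _ _ fun v => ?_
  split_ifs with hv
  · rw [MonoidHom.range_eq_map, ← hgen v, MonoidHom.map_closure]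
    exact Subgroup.closure_mono (Set.subset_biUnion_of_mem (u := fun v => of Γ G v '' X v) hv)
  · simp

end GraphProduct

open GraphProduct in
theorem shortlexConjugacyNormalForms_subgraphProduct_general {V : Type*}
    [LinearOrder V] (Γ : SimpleGraph V) (G : V → Type*) [∀ v, Group (G v)]
    (X : ∀ v, Set (G v))
    (hgen : ∀ v, Subgroup.closure (X v) = ⊤)
    (r : ∀ v, {x : G v // x ∈ X v} → {x : G v // x ∈ X v} → Prop)
    (V' : Set V) :
    {w | w ∈ SLCwords Γ G X r Set.univ ∧ ∀ a ∈ w, a.1 ∈ V'}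
      = SLCwords Γ G X r V' := by
  classical
  ext w
  simp only [Set.mem_ofPred_eq, SLCwords]
  constructor
  · rintro ⟨⟨-, hmin⟩, hw⟩
    refine ⟨hw, fun u _ ⟨g, hg, hconj⟩ => hmin u (fun _ _ => trivial) ⟨g, ?_, hconj⟩⟩
    exact Subgroup.closure_mono (XS_mono Γ G X (Set.subset_univ V')) hg
  · rintro ⟨hw, hmin⟩
    refine ⟨⟨fun _ _ => trivial, fun u _ ⟨g, _, hconj⟩ => ?_⟩, hw⟩
    set u' := u.filter (·.1 ∈ V')
    have hu' : ∀ a ∈ u', a.1 ∈ V' := fun a ha => of_decide_eq_true (List.mem_filter.mp ha).2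
    have hρw : retract Γ G V' (evalWord Γ G X w) = evalWord Γ G X w := by
      rw [retract_evalWord, List.filter_eq_self.mpr fun a ha => decide_eq_true (hw a ha)]
    have hconj' : retract Γ G V' g * evalWord Γ G X u' * (retract Γ G V' g)⁻¹
        = evalWord Γ G X w := by
      rw [← retract_evalWord, ← map_inv, ← map_mul, ← map_mul, hconj, hρw]
    exact List.filter_sublist.eq_or_shortlex
      (hmin u' hu' ⟨_, range_retract_le_closure Γ G V' X hgen ⟨g, rfl⟩, hconj'⟩)

/-- In a graph product over a finite simple graph with shortlex ordering compatible
with a total order on the vertices, for any `V' ⊆ V` the shortlex conjugacy normal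
forms of `G_V` lying in `X_{V'}^*` are exactly the shortlex conjugacy normal forms of
the subgraph product: `SLC(G_V, X_V) ∩ X_{V'}^* = SLC(G_{V'}, X_{V'})`. -/
theorem shortlexConjugacyNormalForms_subgraphProduct {V : Type*} [Fintype V]
    [LinearOrder V] (Γ : SimpleGraph V) (G : V → Type*) [∀ v, Group (G v)]
    (X : ∀ v, Set (G v))
    (hinv : ∀ v, ∀ x ∈ X v, x⁻¹ ∈ X v)
    (hgen : ∀ v, Subgroup.closure (X v) = ⊤)
    (r : ∀ v, {x : G v // x ∈ X v} → {x : G v // x ∈ X v} → Prop)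
    (hr : ∀ v, IsStrictTotalOrder {x : G v // x ∈ X v} (r v))
    (V' : Set V) :
    {w | w ∈ SLCwords Γ G X r Set.univ ∧ ∀ a ∈ w, a.1 ∈ V'}
      = SLCwords Γ G X r V' :=
  shortlexConjugacyNormalForms_subgraphProduct_general Γ G X hgen r V'
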